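/- In ℚ[[z,w]] the bivariate generating function R(z,w) satisfies the quadratic equation z^{2s}w^s·R(z,w)² − [(1−z)(1−z²w+z^{2s}w^s) + z^{2s}w^s·T_m(z)]·R(z,w) + (1 − z²w + z^{2s}w^s) = 0. -/

import Mathlib

open scoped Classical

/-- `x` is an endpoint of some pair in `P`. -/
def Paired (P : Finset (ℕ × ℕ)) (x : ℕ) : Prop := ∃ p ∈ P, p.1 = x ∨ p.2 = x

/-- Conditions (i)–(iii): `P` is a set of pairs `(i,j)`, `1 ≤ i < j ≤ n`, each index in at
most one pair, noncrossing, and every hairpin loop has at least `m` unpaired bases. -/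
def SecBase (m n : ℕ) (P : Finset (ℕ × ℕ)) : Prop :=
  (∀ p ∈ P, 1 ≤ p.1 ∧ p.1 < p.2 ∧ p.2 ≤ n) ∧
  (∀ p ∈ P, ∀ q ∈ P, p ≠ q → p.1 ≠ q.1 ∧ p.1 ≠ q.2 ∧ p.2 ≠ q.1 ∧ p.2 ≠ q.2) ∧
  (∀ p ∈ P, ∀ q ∈ P, ¬(p.1 < q.1 ∧ q.1 < p.2 ∧ p.2 < q.2)) ∧
  (∀ p ∈ P, (∀ x, p.1 < x → x < p.2 → ¬Paired P x) → m ≤ p.2 - p.1 - 1)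

/-- Condition (iv): every maximal stack of `P` has length at least `s`. -/
def StackCond (s : ℕ) (P : Finset (ℕ × ℕ)) : Prop :=
  ∀ p ∈ P, (p.1 - 1, p.2 + 1) ∉ P → ∃ t, s ≤ t ∧ ∀ a < t, (p.1 + a, p.2 - a) ∈ P

/-- `P` is a secondary structure of length `n` with minimum stem size `s` and minimum
hairpin size `m`. -/
def IsSecStruct (s m n : ℕ) (P : Finset (ℕ × ℕ)) : Prop :=
  SecBase m n P ∧ StackCond s P

/-- The (finite) set of all secondary structures of length `n`. -/
noncomputable def secFinset (s m n : ℕ) : Finset (Finset (ℕ × ℕ)) :=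
  (Finset.range (n + 1) ×ˢ Finset.range (n + 1)).powerset.filter (IsSecStruct s m n)

/-- `r n`: the number of secondary structures of length `n`. -/
noncomputable def secCount (s m n : ℕ) : ℕ := (secFinset s m n).card

/-- `r_{n,l}`: number of secondary structures of length `n` with exactly `l` pairs. -/
noncomputable def secCount2 (s m n l : ℕ) : ℕ :=
  ((secFinset s m n).filter (fun P => P.card = l)).card

/-- Bivariate generating function `R(z,w) = ∑ r_{n,l} z^n w^l` in `ℚ[[z,w]]`. -/
noncomputable def Rgf2 (s m : ℕ) : MvPowerSeries (Fin 2) ℚ :=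
  fun d => (secCount2 s m (d 0) (d 1) : ℚ)

/-!
Splitting a structure according to the partner of base `1` gives `R = 1 + zR + CR`, where `C`
counts the closed structures, those pairing `1` with `n`. A closed structure whose outer stack is
longer than `s` is a closed structure of length `n - 2` inside one more pair; one whose outer stack
has exactly `s` pairs is a stack of `s` pairs around a structure that does not pair its two ends
and, if empty, has length at least `m`. Hence `C = z²wC + z^{2s}w^s (R - C - T_m)`, and
eliminating `C` gives the quadratic equation.
-/

open Finset

/-- A secondary structure on the bases `k + 1, …, n`, with the stack condition of `StackCond`
taken at `t = s`. -/
structure IsSecStructOn (s m k n : ℕ) (P : Finset (ℕ × ℕ)) : Prop where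
  bounds : ∀ p ∈ P, k + 1 ≤ p.1 ∧ p.1 < p.2 ∧ p.2 ≤ n
  endpoints_ne : ∀ p ∈ P, ∀ q ∈ P, p ≠ q →
    p.1 ≠ q.1 ∧ p.1 ≠ q.2 ∧ p.2 ≠ q.1 ∧ p.2 ≠ q.2
  noncrossing : ∀ p ∈ P, ∀ q ∈ P, ¬(p.1 < q.1 ∧ q.1 < p.2 ∧ p.2 < q.2)
  hairpin : ∀ p ∈ P, (∀ x, p.1 < x → x < p.2 → ¬Paired P x) → m ≤ p.2 - p.1 - 1
  stack : ∀ p ∈ P, (p.1 - 1, p.2 + 1) ∉ P → ∀ a < s, (p.1 + a, p.2 - a) ∈ P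

theorem stackCond_iff {s : ℕ} {P : Finset (ℕ × ℕ)} :
    StackCond s P ↔
      ∀ p ∈ P, (p.1 - 1, p.2 + 1) ∉ P → ∀ a < s, (p.1 + a, p.2 - a) ∈ P := by
  refine ⟨fun h p hp hp' a ha => ?_, fun h p hp hp' => ⟨s, le_rfl, h p hp hp'⟩⟩
  obtain ⟨t, hst, ht⟩ := h p hp hp'
  exact ht a (by omega)

theorem isSecStruct_iff {s m n : ℕ} {P : Finset (ℕ × ℕ)} :
    IsSecStruct s m n P ↔ IsSecStructOn s m 0 n P := by
  rw [IsSecStruct, SecBase, stackCond_iff]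
  exact ⟨fun ⟨⟨h₁, h₂, h₃, h₄⟩, h₅⟩ => ⟨h₁, h₂, h₃, h₄, h₅⟩,
    fun ⟨h₁, h₂, h₃, h₄, h₅⟩ => ⟨⟨h₁, h₂, h₃, h₄⟩, h₅⟩⟩

theorem mem_secFinset {s m n : ℕ} {P : Finset (ℕ × ℕ)} :
    P ∈ secFinset s m n ↔ IsSecStructOn s m 0 n P := by
  rw [secFinset, mem_filter, mem_powerset, isSecStruct_iff, and_iff_right_iff_imp]
  intro h p hp
  have := h.bounds p hp
  simp only [mem_product, mem_range]
  omega

namespace IsSecStructOn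

variable {s m k n : ℕ} {P : Finset (ℕ × ℕ)}

theorem mono {k' n' : ℕ} (h : IsSecStructOn s m k n P) (hk : k' ≤ k) (hn : n ≤ n') :
    IsSecStructOn s m k' n' P where
  bounds p hp := by have := h.bounds p hp; omega
  endpoints_ne := h.endpoints_ne
  noncrossing := h.noncrossing
  hairpin := h.hairpin
  stack := h.stack

theorem fst_pos (h : IsSecStructOn s m k n P) {p : ℕ × ℕ} (hp : p ∈ P) : 0 < p.1 := by
  have := h.bounds p hp; omega

theorem eq_of_fst_eq (h : IsSecStructOn s m k n P) {p q : ℕ × ℕ} (hp : p ∈ P) (hq : q ∈ P)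
    (e : p.1 = q.1) : p = q := by
  by_contra hne; exact (h.endpoints_ne p hp q hq hne).1 e

end IsSecStructOn

theorem isSecStructOn_empty (s m k n : ℕ) : IsSecStructOn s m k n ∅ := by
  constructor <;> simp

def shift (c : ℕ) (P : Finset (ℕ × ℕ)) : Finset (ℕ × ℕ) :=
  P.map ((addRightEmbedding c).prodMap (addRightEmbedding c))

section shift

variable {c x y : ℕ} {P : Finset (ℕ × ℕ)}

theorem mem_shift {q : ℕ × ℕ} :
    q ∈ shift c P ↔ ∃ p ∈ P, p.1 + c = q.1 ∧ p.2 + c = q.2 := by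
  simp [shift, Prod.ext_iff]

theorem add_mem_shift : (x + c, y + c) ∈ shift c P ↔ (x, y) ∈ P := by
  simp [shift]

theorem card_shift : #(shift c P) = #P := card_map _

theorem shift_injective : Function.Injective (shift c) := map_injective _

theorem forall_mem_shift {R : ℕ × ℕ → Prop} :
    (∀ q ∈ shift c P, R q) ↔ ∀ p ∈ P, R (p.1 + c, p.2 + c) :=
  forall_mem_map

theorem paired_shift_add : Paired (shift c P) (x + c) ↔ Paired P x := by
  simp only [Paired, mem_shift]
  constructor
  · rintro ⟨q, ⟨p, hp, h₁, h₂⟩, hx⟩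
    exact ⟨p, hp, by omega⟩
  · rintro ⟨p, hp, hx⟩
    exact ⟨(p.1 + c, p.2 + c), ⟨p, hp, rfl, rfl⟩, by omega⟩

theorem shift_mem {p : ℕ × ℕ} (hp : p ∈ P) : (p.1 + c, p.2 + c) ∈ shift c P :=
  add_mem_shift.2 hp

theorem unpaired_between_shift_iff {a b : ℕ} :
    (∀ x, a + c < x → x < b + c → ¬Paired (shift c P) x) ↔
      ∀ y, a < y → y < b → ¬Paired P y := by
  refine ⟨fun h y hay hyb => ?_, fun h x hax hxb => ?_⟩
  · rw [← paired_shift_add]; exact h (y + c) (by omega) (by omega)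
  · obtain ⟨y, rfl⟩ : ∃ y, x = y + c := ⟨x - c, by omega⟩
    rw [paired_shift_add]; exact h y (by omega) (by omega)

theorem shift_pred_succ {p : ℕ × ℕ} (hp : 1 ≤ p.1) :
    (p.1 + c - 1, p.2 + c + 1) ∈ shift c P ↔ (p.1 - 1, p.2 + 1) ∈ P := by
  have e : (p.1 + c - 1, p.2 + c + 1) = ((p.1 - 1) + c, (p.2 + 1) + c) := by
    ext <;> simp only <;> omega
  rw [e, add_mem_shift]

end shift

theorem isSecStructOn_shift_iff {s m k n c : ℕ} {P : Finset (ℕ × ℕ)} :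
    IsSecStructOn s m (k + c) (n + c) (shift c P) ↔ IsSecStructOn s m k n P := by
  constructor
  · intro h
    have hb : ∀ p ∈ P, k + 1 ≤ p.1 ∧ p.1 < p.2 ∧ p.2 ≤ n := fun p hp => by
      have := h.bounds _ (shift_mem hp); omega
    refine ⟨hb, fun p hp q hq hne => ?_, fun p hp q hq => ?_, fun p hp hfree => ?_,
      fun p hp htop a ha => ?_⟩
    · have := h.endpoints_ne _ (shift_mem hp) _ (shift_mem hq)
        (fun e => hne (Prod.ext (by simpa using congrArg Prod.fst e)
          (by simpa using congrArg Prod.snd e)))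
      omega
    · have := h.noncrossing _ (shift_mem hp) _ (shift_mem hq); omega
    · have := h.hairpin _ (shift_mem hp) (unpaired_between_shift_iff.2 hfree); omega
    · have hp1 := (hb p hp).1
      obtain ⟨q, hq, hq₁, hq₂⟩ := mem_shift.1 <| h.stack _ (shift_mem hp)
        (fun e => htop ((shift_pred_succ (by omega)).1 e)) a ha
      have := hb q hq
      convert hq using 1
      ext <;> simp only at hq₁ hq₂ ⊢ <;> omega
  · intro h
    refine ⟨forall_mem_shift.2 fun p hp => ?_,
      forall_mem_shift.2 fun p hp => forall_mem_shift.2 fun q hq hne => ?_,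
      forall_mem_shift.2 fun p hp => forall_mem_shift.2 fun q hq => ?_,
      forall_mem_shift.2 fun p hp hfree => ?_, forall_mem_shift.2 fun p hp htop a ha => ?_⟩
    · have := h.bounds p hp; omega
    · have := h.endpoints_ne p hp q hq (fun e => hne (by rw [e])); omega
    · have := h.noncrossing p hp q hq; omega
    · have := h.hairpin p hp (unpaired_between_shift_iff.1 hfree); omega
    · have hp1 := (h.bounds p hp).1
      have hmem := h.stack p hp (fun e => htop ((shift_pred_succ (by omega)).2 e)) a ha
      have := h.bounds _ hmem
      convert shift_mem (c := c) hmem using 2 <;> simp only <;> omega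

theorem IsSecStructOn.exists_shift_eq {s m k n c : ℕ} {P : Finset (ℕ × ℕ)}
    (h : IsSecStructOn s m (k + c) (n + c) P) :
    ∃ Q, IsSecStructOn s m k n Q ∧ shift c Q = P := by
  set Q := P.image fun p => (p.1 - c, p.2 - c)
  have hQ : shift c Q = P := by
    ext q
    simp only [Q, mem_shift, mem_image]
    constructor
    · rintro ⟨_, ⟨p, hp, rfl⟩, h₁, h₂⟩
      have := h.bounds p hp
      convert hp using 1
      ext <;> simp only at h₁ h₂ ⊢ <;> omega
    · intro hq
      have := h.bounds q hq
      exact ⟨_, ⟨q, hq, rfl⟩, by simp only; omega, by simp only; omega⟩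
  exact ⟨Q, isSecStructOn_shift_iff.1 (hQ ▸ h), hQ⟩

section unionShift

variable {k : ℕ} {A B : Finset (ℕ × ℕ)}

theorem filter_union_shift_fst_le (hA : ∀ p ∈ A, p.1 ≤ k) (hB : ∀ q ∈ B, 0 < q.1) :
    (A ∪ shift k B).filter (fun p => p.1 ≤ k) = A := by
  rw [filter_union, filter_true_of_mem hA, filter_false_of_mem, union_empty]
  exact forall_mem_shift.2 fun q hq => by have := hB q hq; simp only; omega

theorem filter_union_shift_lt_fst (hA : ∀ p ∈ A, p.1 ≤ k) (hB : ∀ q ∈ B, 0 < q.1) :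
    (A ∪ shift k B).filter (fun p => k < p.1) = shift k B := by
  rw [filter_union, filter_false_of_mem (fun p hp => by have := hA p hp; omega),
    filter_true_of_mem, empty_union]
  exact forall_mem_shift.2 fun q hq => by have := hB q hq; simp only; omega

theorem card_union_shift (hA : ∀ p ∈ A, p.1 ≤ k) (hB : ∀ q ∈ B, 0 < q.1) :
    #(A ∪ shift k B) = #A + #B := by
  rw [card_union_of_disjoint, card_shift]
  refine disjoint_left.2 fun p hp hp' => ?_
  have := hA p hp
  obtain ⟨q, hq, e, -⟩ := mem_shift.1 hp'
  have := hB q hq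
  omega

theorem union_shift_injOn {A' B' : Finset (ℕ × ℕ)} (hA : ∀ p ∈ A, p.1 ≤ k)
    (hB : ∀ q ∈ B, 0 < q.1) (hA' : ∀ p ∈ A', p.1 ≤ k) (hB' : ∀ q ∈ B', 0 < q.1)
    (e : A ∪ shift k B = A' ∪ shift k B') : A = A' ∧ B = B' :=
  ⟨by rw [← filter_union_shift_fst_le hA hB, e, filter_union_shift_fst_le hA' hB'],
    shift_injective (by rw [← filter_union_shift_lt_fst hA hB, e,
      filter_union_shift_lt_fst hA' hB'])⟩

end unionShift

theorem Paired.mono {P Q : Finset (ℕ × ℕ)} {x : ℕ} (hx : Paired P x) (hPQ : P ⊆ Q) :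
    Paired Q x :=
  let ⟨p, hp, hpx⟩ := hx; ⟨p, hPQ hp, hpx⟩

namespace IsSecStructOn

variable {s m k n : ℕ} {P Q : Finset (ℕ × ℕ)}

theorem hairpin_of_subset (h : IsSecStructOn s m k n P) (hPQ : P ⊆ Q) {p : ℕ × ℕ}
    (hp : p ∈ P) (hfree : ∀ x, p.1 < x → x < p.2 → ¬Paired Q x) : m ≤ p.2 - p.1 - 1 :=
  h.hairpin p hp fun x h₁ h₂ hx => hfree x h₁ h₂ (hx.mono hPQ)

theorem stack_of_subset (h : IsSecStructOn s m k n P) (hPQ : P ⊆ Q) {p : ℕ × ℕ}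
    (hp : p ∈ P) (htop : (p.1 - 1, p.2 + 1) ∉ Q) : ∀ a < s, (p.1 + a, p.2 - a) ∈ Q :=
  fun a ha => hPQ (h.stack p hp (fun e => htop (hPQ e)) a ha)

/-- A pair of `Q` whose enclosing pair in `P` is dropped starts a new stack in `Q`; `hparent`
asks that this stack be full already in `P`. -/
theorem of_subset {k' n' : ℕ} (h : IsSecStructOn s m k n P) (hQP : Q ⊆ P)
    (hbounds : ∀ p ∈ Q, k' + 1 ≤ p.1 ∧ p.2 ≤ n')
    (hinner : ∀ p ∈ Q, ∀ q ∈ P, p.1 < q.1 → q.1 < p.2 → q ∈ Q)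
    (hparent : ∀ p ∈ Q, (p.1 - 1, p.2 + 1) ∈ P → (p.1 - 1, p.2 + 1) ∉ Q →
      ∀ a < s, (p.1 + a, p.2 - a) ∈ P) :
    IsSecStructOn s m k' n' Q where
  bounds p hp := by have := hbounds p hp; have := h.bounds p (hQP hp); omega
  endpoints_ne p hp q hq := h.endpoints_ne p (hQP hp) q (hQP hq)
  noncrossing p hp q hq := h.noncrossing p (hQP hp) q (hQP hq)
  hairpin p hp hfree := by
    refine h.hairpin p (hQP hp) fun x hpx hxp ⟨q, hq, hqx⟩ => ?_
    have hpq := h.bounds q hq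
    have hqQ : q ∈ Q := by
      refine hinner p hp q hq ?_ (by omega)
      by_contra hle
      have hne : q ≠ p := by rintro rfl; omega
      have := h.endpoints_ne q hq p (hQP hp) hne
      have := h.noncrossing q hq p (hQP hp)
      omega
    exact hfree x hpx hxp ⟨q, hqQ, hqx⟩
  stack p hp htop a ha := by
    have hmem : (p.1 + a, p.2 - a) ∈ P := by
      by_cases htopP : (p.1 - 1, p.2 + 1) ∈ P
      · exact hparent p hp htopP htop a ha
      · exact h.stack p (hQP hp) htopP a ha
    rcases Nat.eq_zero_or_pos a with rfl | hapos
    · simpa using hp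
    · have := h.bounds _ hmem
      exact hinner p hp _ hmem (by simp only; omega) (by simp only; omega)

end IsSecStructOn

theorem IsSecStructOn.union {s m j k n : ℕ} {P₁ P₂ : Finset (ℕ × ℕ)}
    (h₁ : IsSecStructOn s m j k P₁) (h₂ : IsSecStructOn s m k n P₂) (hjk : j ≤ k)
    (hkn : k ≤ n) : IsSecStructOn s m j n (P₁ ∪ P₂) where
  bounds p hp := by
    rcases mem_union.1 hp with hp | hp
    · have := h₁.bounds p hp; omega
    · have := h₂.bounds p hp; omega
  endpoints_ne p hp q hq hne := by
    rcases mem_union.1 hp with hp | hp <;> rcases mem_union.1 hq with hq | hq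
    · exact h₁.endpoints_ne p hp q hq hne
    · have := h₁.bounds p hp; have := h₂.bounds q hq; omega
    · have := h₂.bounds p hp; have := h₁.bounds q hq; omega
    · exact h₂.endpoints_ne p hp q hq hne
  noncrossing p hp q hq := by
    rcases mem_union.1 hp with hp | hp <;> rcases mem_union.1 hq with hq | hq
    · exact h₁.noncrossing p hp q hq
    · have := h₁.bounds p hp; have := h₂.bounds q hq; omega
    · have := h₂.bounds p hp; have := h₁.bounds q hq; omega
    · exact h₂.noncrossing p hp q hq
  hairpin p hp := by
    rcases mem_union.1 hp with hp | hp
    exacts [h₁.hairpin_of_subset subset_union_left hp,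
      h₂.hairpin_of_subset subset_union_right hp]
  stack p hp := by
    rcases mem_union.1 hp with hp | hp
    exacts [h₁.stack_of_subset subset_union_left hp, h₂.stack_of_subset subset_union_right hp]

/-- The partner of base `1`, or `0` when base `1` is unpaired. -/
noncomputable def partner (P : Finset (ℕ × ℕ)) : ℕ :=
  (P.filter fun p => p.1 = 1).sup Prod.snd

namespace IsSecStructOn

variable {s m k n : ℕ} {P : Finset (ℕ × ℕ)}

theorem partner_eq (h : IsSecStructOn s m k n P) {j : ℕ} (hj : (1, j) ∈ P) : partner P = j := by
  have : P.filter (fun p => p.1 = 1) = {(1, j)} :=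
    eq_singleton_iff_unique_mem.2 ⟨mem_filter.2 ⟨hj, rfl⟩, fun q hq =>
      h.eq_of_fst_eq (mem_filter.1 hq).1 hj (mem_filter.1 hq).2⟩
  rw [partner, this, sup_singleton]

theorem mem_partner (h : IsSecStructOn s m k n P) (hP : partner P ≠ 0) :
    (1, partner P) ∈ P := by
  obtain ⟨q, hq⟩ : (P.filter fun p => p.1 = 1).Nonempty := by
    rw [nonempty_iff_ne_empty]
    rintro he
    rw [partner, he, sup_empty] at hP
    exact hP rfl
  obtain ⟨hqP, hq₁⟩ := mem_filter.1 hq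
  have hq' : q = (1, q.2) := Prod.ext hq₁ rfl
  rw [hq'] at hqP
  rwa [h.partner_eq hqP]

theorem partner_le (h : IsSecStructOn s m k n P) : partner P ≤ n := by
  by_cases hP : partner P = 0
  · omega
  · exact (h.bounds _ (h.mem_partner hP)).2.2

theorem fst_ne_one_of_partner_eq_zero (h : IsSecStructOn s m k n P) (hP : partner P = 0)
    {p : ℕ × ℕ} (hp : p ∈ P) : p.1 ≠ 1 := by
  intro hp₁
  have := h.partner_eq (show (1, p.2) ∈ P from hp₁ ▸ hp)
  have := h.bounds p hp
  omega

theorem le_or_lt_of_mem (h : IsSecStructOn s m k n P) {j : ℕ} (hj : (1, j) ∈ P) {p : ℕ × ℕ}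
    (hp : p ∈ P) : p.2 ≤ j ∨ j < p.1 := by
  by_cases e : p = (1, j)
  · subst e; simp
  · have := h.endpoints_ne p hp _ hj e
    have := h.noncrossing _ hj p hp
    have := h.bounds p hp
    simp only at *
    omega

end IsSecStructOn

theorem isSecStructOn_union_shift {s m k n : ℕ} {A B : Finset (ℕ × ℕ)}
    (hA : IsSecStructOn s m 0 k A) (hB : IsSecStructOn s m 0 (n - k) B) (hkn : k ≤ n) :
    IsSecStructOn s m 0 n (A ∪ shift k B) := by
  have hB' : IsSecStructOn s m (0 + k) (n - k + k) (shift k B) := isSecStructOn_shift_iff.2 hB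
  rw [zero_add, Nat.sub_add_cancel hkn] at hB'
  exact hA.union hB' (Nat.zero_le k) hkn

theorem IsSecStructOn.exists_eq_union_shift {s m k n : ℕ} {P : Finset (ℕ × ℕ)}
    (h : IsSecStructOn s m 0 n P) (hk : (1, k) ∈ P) :
    ∃ A B, IsSecStructOn s m 0 k A ∧ (1, k) ∈ A ∧ IsSecStructOn s m 0 (n - k) B ∧
      A ∪ shift k B = P := by
  have hside := fun p (hp : p ∈ P) => h.le_or_lt_of_mem hk hp
  have hkn := (h.bounds _ hk).2.2
  have hA : IsSecStructOn s m 0 k (P.filter fun p => p.2 ≤ k) := by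
    refine h.of_subset (filter_subset _ _) (fun p hp => ?_) (fun p hp q hq hpq hqp => ?_)
      (fun p hp htop htop' => ?_) <;> obtain ⟨hpP, hpk⟩ := mem_filter.1 hp
    · have := h.bounds p hpP; omega
    · refine mem_filter.2 ⟨hq, ?_⟩
      have := hside q hq; omega
    · refine absurd (mem_filter.2 ⟨htop, ?_⟩) htop'
      have := hside _ htop; have := h.bounds p hpP
      simp only at *; omega
  have hB : IsSecStructOn s m (0 + k) (n - k + k) (P.filter fun p => k < p.1) := by
    refine h.of_subset (filter_subset _ _) (fun p hp => ?_) (fun p hp q hq hpq hqp => ?_)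
      (fun p hp htop htop' => ?_) <;> obtain ⟨hpP, hpk⟩ := mem_filter.1 hp
    · have := h.bounds p hpP; omega
    · exact mem_filter.2 ⟨hq, by omega⟩
    · refine absurd (mem_filter.2 ⟨htop, ?_⟩) htop'
      have := hside _ htop; have := h.bounds p hpP
      simp only at *; omega
  obtain ⟨B, hB, hBP⟩ := hB.exists_shift_eq
  refine ⟨_, B, hA, mem_filter.2 ⟨hk, le_rfl⟩, hB, ?_⟩
  rw [hBP, ← filter_or]
  exact filter_true_of_mem hside

def outerStack (t N : ℕ) : Finset (ℕ × ℕ) := (range t).image fun a => (1 + a, N - a)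

def wrap (t r : ℕ) (Q : Finset (ℕ × ℕ)) : Finset (ℕ × ℕ) :=
  outerStack t (r + 2 * t) ∪ shift t Q

section wrap

variable {t r : ℕ} {Q : Finset (ℕ × ℕ)}

theorem mem_outerStack {N : ℕ} {p : ℕ × ℕ} :
    p ∈ outerStack t N ↔ ∃ a < t, (1 + a, N - a) = p := by
  simp [outerStack]

theorem card_outerStack (N : ℕ) : #(outerStack t N) = t := by
  rw [outerStack, card_image_of_injective _ (fun a b e => by simpa using congrArg Prod.fst e),
    card_range]

theorem outerStack_mem_wrap {a : ℕ} (ha : a < t) : (1 + a, r + 2 * t - a) ∈ wrap t r Q :=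
  mem_union_left _ (mem_outerStack.2 ⟨a, ha, rfl⟩)

theorem mem_wrap {p : ℕ × ℕ} :
    p ∈ wrap t r Q ↔ (∃ a < t, (1 + a, r + 2 * t - a) = p) ∨ p ∈ shift t Q := by
  rw [wrap, mem_union, mem_outerStack]

theorem add_mem_wrap {x y : ℕ} (hx : 1 ≤ x) :
    (x + t, y + t) ∈ wrap t r Q ↔ (x, y) ∈ Q := by
  rw [mem_wrap, add_mem_shift, or_iff_right]
  rintro ⟨a, ha, e⟩
  have := congrArg Prod.fst e
  simp only at this
  omega

theorem fst_le_of_mem_outerStack {N : ℕ} : ∀ p ∈ outerStack t N, p.1 ≤ t := by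
  intro p hp
  obtain ⟨a, ha, rfl⟩ := mem_outerStack.1 hp
  simp only; omega

theorem card_wrap (hQ : ∀ q ∈ Q, 0 < q.1) : #(wrap t r Q) = t + #Q := by
  rw [wrap, card_union_shift fst_le_of_mem_outerStack hQ, card_outerStack]

theorem wrap_injOn {Q' : Finset (ℕ × ℕ)} (hQ : ∀ q ∈ Q, 0 < q.1)
    (hQ' : ∀ q ∈ Q', 0 < q.1) (e : wrap t r Q = wrap t r Q') : Q = Q' :=
  (union_shift_injOn fst_le_of_mem_outerStack hQ fst_le_of_mem_outerStack hQ' e).2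

end wrap

theorem eq_of_unpaired_inside_outerStack {s m t r a : ℕ} {Q : Finset (ℕ × ℕ)}
    (hQ : IsSecStructOn s m 0 r Q) (ha : a < t)
    (hfree : ∀ x, 1 + a < x → x < r + 2 * t - a → ¬Paired (wrap t r Q) x) :
    a + 1 = t ∧ Q = ∅ := by
  by_cases hlast : a + 1 < t
  · exact absurd ⟨_, outerStack_mem_wrap hlast, Or.inl rfl⟩
      (hfree (1 + (a + 1)) (by omega) (by omega))
  refine ⟨by omega, eq_empty_of_forall_notMem fun q hq => ?_⟩
  have := hQ.bounds q hq
  exact hfree (q.1 + t) (by omega) (by omega)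
    ⟨_, subset_union_right (shift_mem hq), Or.inl rfl⟩

theorem eq_zero_of_outerStack_top_not_mem {t r a : ℕ} {Q : Finset (ℕ × ℕ)} (ha : a < t)
    (htop : (1 + a - 1, r + 2 * t - a + 1) ∉ wrap t r Q) : a = 0 := by
  by_contra ha₀
  have e : (1 + a - 1, r + 2 * t - a + 1) = (1 + (a - 1), r + 2 * t - (a - 1)) := by
    ext <;> simp only <;> omega
  exact htop (e ▸ outerStack_mem_wrap (by omega))

theorem isSecStructOn_wrap {s m t r : ℕ} {Q : Finset (ℕ × ℕ)} (hQ : IsSecStructOn s m 0 r Q)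
    (ht : 1 ≤ t) (hstack : ∀ b, t + b < s → (1 + b, r - b) ∈ Q)
    (hhair : Q = ∅ → m ≤ r) :
    IsSecStructOn s m 0 (r + 2 * t) (wrap t r Q) := by
  have hQ' : IsSecStructOn s m t (r + t) (shift t Q) := by
    simpa using isSecStructOn_shift_iff (k := 0) (c := t) |>.2 hQ
  have hsub : shift t Q ⊆ wrap t r Q := subset_union_right
  refine ⟨fun p hp => ?_, fun p hp q hq hne => ?_, fun p hp q hq => ?_, fun p hp hfree => ?_,
    fun p hp htop => ?_⟩
  · rcases mem_wrap.1 hp with ⟨a, ha, rfl⟩ | hp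
    · simp only; omega
    · have := hQ'.bounds p hp; omega
  · rcases mem_wrap.1 hp with ⟨a, ha, rfl⟩ | hp <;>
      rcases mem_wrap.1 hq with ⟨b, hb, rfl⟩ | hq
    · have : a ≠ b := by rintro rfl; exact hne rfl
      simp only; omega
    · have := hQ'.bounds q hq; simp only; omega
    · have := hQ'.bounds p hp; simp only; omega
    · exact hQ'.endpoints_ne p hp q hq hne
  · rcases mem_wrap.1 hp with ⟨a, ha, rfl⟩ | hp <;>
      rcases mem_wrap.1 hq with ⟨b, hb, rfl⟩ | hq
    · simp only; omega
    · have := hQ'.bounds q hq; simp only; omega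
    · have := hQ'.bounds p hp; simp only; omega
    · exact hQ'.noncrossing p hp q hq
  · rcases mem_wrap.1 hp with ⟨a, ha, rfl⟩ | hp
    · obtain ⟨ha, hQe⟩ := eq_of_unpaired_inside_outerStack hQ ha hfree
      have := hhair hQe
      simp only; omega
    · exact hQ'.hairpin_of_subset hsub hp hfree
  · rcases mem_wrap.1 hp with ⟨a, ha, rfl⟩ | hp
    · obtain rfl := eq_zero_of_outerStack_top_not_mem ha htop
      intro b hb
      by_cases hbt : b < t
      · simpa using outerStack_mem_wrap (r := r) (Q := Q) hbt
      · have hmem := hstack (b - t) (by omega)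
        have := hQ.bounds _ hmem
        convert hsub (shift_mem hmem) using 2 <;> simp only <;> omega
    · exact hQ'.stack_of_subset hsub hp htop

namespace IsSecStructOn

variable {s m k N : ℕ} {P : Finset (ℕ × ℕ)}

theorem outer_stack (h : IsSecStructOn s m k N P) (hN : (1, N) ∈ P) :
    ∀ a < s, (1 + a, N - a) ∈ P :=
  h.stack _ hN fun h0 => by simpa using h.fst_pos h0

theorem eq_outerStack_or (h : IsSecStructOn s m k N P) {t : ℕ}
    (hstk : ∀ a < t, (1 + a, N - a) ∈ P) {p : ℕ × ℕ} (hp : p ∈ P) :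
    (∃ a < t, (1 + a, N - a) = p) ∨ (t + 1 ≤ p.1 ∧ p.2 ≤ N - t) := by
  induction t with
  | zero => have := h.bounds p hp; right; omega
  | succ t ih =>
    rcases ih fun a ha => hstk a (by omega) with ⟨a, ha, e⟩ | ⟨h₁, h₂⟩
    · exact Or.inl ⟨a, by omega, e⟩
    · by_cases e : (1 + t, N - t) = p
      · exact Or.inl ⟨t, by omega, e⟩
      · have := h.endpoints_ne _ (hstk t (by omega)) p hp e
        simp only at this
        right; omega

/-- Once the stack is peeled off, `(t + 1, r + t)` starts a stack; hence `hnext`. -/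
theorem exists_eq_wrap {t r : ℕ} (h : IsSecStructOn s m 0 (r + 2 * t) P)
    (hstk : ∀ a < t, (1 + a, r + 2 * t - a) ∈ P)
    (hnext : (t + 1, r + t) ∈ P → ∀ b < s, (t + 1 + b, r + t - b) ∈ P) :
    ∃ Q, IsSecStructOn s m 0 r Q ∧ wrap t r Q = P := by
  have hsplit := fun p (hp : p ∈ P) => h.eq_outerStack_or hstk hp
  set F := P.filter fun p => t + 1 ≤ p.1
  have hF : IsSecStructOn s m (0 + t) (r + t) F := by
    refine h.of_subset (filter_subset _ _) (fun p hp => ?_) (fun p hp q hq hpq _ => ?_)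
      (fun p hp htopP htopF => ?_)
    · obtain ⟨hpP, hp₁⟩ := mem_filter.1 hp
      rcases hsplit p hpP with ⟨a, ha, rfl⟩ | hp'
      · simp only at hp₁; omega
      · omega
    · exact mem_filter.2 ⟨hq, by have := (mem_filter.1 hp).2; omega⟩
    · obtain ⟨hpP, hp₁⟩ := mem_filter.1 hp
      have hp₁' : p.1 = t + 1 := by
        by_contra hne
        exact htopF (mem_filter.2 ⟨htopP, by simp only; omega⟩)
      have hp₂ : p.2 = r + t := by
        rcases hsplit _ htopP with ⟨a, ha, e⟩ | ⟨h₁, -⟩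
        · simp only [Prod.ext_iff] at e; omega
        · simp only at h₁; omega
      have hpe : p = (t + 1, r + t) := Prod.ext hp₁' hp₂
      rw [hpe]
      exact hnext (hpe ▸ hpP)
  obtain ⟨Q, hQ, hQF⟩ := hF.exists_shift_eq
  refine ⟨Q, by simpa using hQ, ?_⟩
  ext p
  rw [mem_wrap, hQF, mem_filter]
  constructor
  · rintro (⟨a, ha, rfl⟩ | ⟨hp, -⟩)
    exacts [hstk a ha, hp]
  · intro hp
    rcases hsplit p hp with hS | ⟨hp₁, -⟩
    exacts [Or.inl hS, Or.inr ⟨hp, hp₁⟩]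

end IsSecStructOn

theorem card_prod_filter_add_eq {α β : Type*} (A : Finset α) (B : Finset β) (f : α → ℕ)
    (g : β → ℕ) (l : ℕ) :
    #{x ∈ A ×ˢ B | f x.1 + g x.2 = l} =
      ∑ j ∈ range (l + 1), #{a ∈ A | f a = j} * #{b ∈ B | g b = l - j} := by
  have : {x ∈ A ×ˢ B | f x.1 + g x.2 = l} =
      (range (l + 1)).biUnion fun j => {a ∈ A | f a = j} ×ˢ {b ∈ B | g b = l - j} := by
    ext x
    simp only [mem_filter, mem_biUnion, mem_range, mem_product]
    constructor
    · rintro ⟨⟨ha, hb⟩, hx⟩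
      exact ⟨f x.1, by omega, ⟨ha, rfl⟩, hb, by omega⟩
    · rintro ⟨j, hj, ⟨ha, rfl⟩, hb, hx⟩
      exact ⟨⟨ha, hb⟩, by omega⟩
  rw [this, card_biUnion]
  · simp only [card_product]
  · intro i _ j _ hij
    simp only [Function.onFun, disjoint_left, mem_product, mem_filter]
    rintro x ⟨⟨-, rfl⟩, -⟩ ⟨⟨-, e⟩, -⟩
    exact hij e

section counting

variable {s m : ℕ}

noncomputable def closedFinset (s m n : ℕ) : Finset (Finset (ℕ × ℕ)) :=
  (secFinset s m n).filter fun P => (1, n) ∈ P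

noncomputable def closedCount (s m n l : ℕ) : ℕ :=
  #{P ∈ closedFinset s m n | #P = l}

theorem mem_closedFinset {s m n : ℕ} {P : Finset (ℕ × ℕ)} :
    P ∈ closedFinset s m n ↔ IsSecStructOn s m 0 n P ∧ (1, n) ∈ P := by
  rw [closedFinset, mem_filter, mem_secFinset]

theorem card_filter_partner_eq_zero (n l : ℕ) :
    #{P ∈ secFinset s m (n + 1) | #P = l ∧ partner P = 0} = secCount2 s m n l := by
  refine (card_bij (fun Q _ => shift 1 Q) (fun Q hQ => ?_) (fun _ _ _ _ e => shift_injective e)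
    (fun P hP => ?_)).symm
  · obtain ⟨hQ, hcard⟩ := mem_filter.1 hQ |>.imp_left mem_secFinset.1
    have hQ' : IsSecStructOn s m (0 + 1) (n + 1) (shift 1 Q) := isSecStructOn_shift_iff.2 hQ
    refine mem_filter.2
      ⟨mem_secFinset.2 (hQ'.mono (by omega) le_rfl), card_shift.trans hcard, ?_⟩
    by_contra hP
    have := hQ'.bounds _ (hQ'.mono (k' := 0) (by omega) le_rfl |>.mem_partner hP)
    omega
  · obtain ⟨h, hcard, hP⟩ := mem_filter.1 hP |>.imp_left mem_secFinset.1
    have h₁ : IsSecStructOn s m (0 + 1) (n + 1) P :=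
      h.of_subset subset_rfl
        (fun p hp => by
          have := h.bounds p hp
          have := h.fst_ne_one_of_partner_eq_zero hP hp
          omega)
        (fun _ _ q hq _ _ => hq) (fun _ _ htop htop' => absurd htop htop')
    obtain ⟨Q, hQ, rfl⟩ := h₁.exists_shift_eq
    exact ⟨Q, mem_filter.2 ⟨mem_secFinset.2 hQ, card_shift.symm.trans hcard⟩, rfl⟩

theorem card_filter_partner_eq {n k : ℕ} (hk : 1 ≤ k) (hkn : k ≤ n) (l : ℕ) :
    #{P ∈ secFinset s m n | #P = l ∧ partner P = k} =
      ∑ j ∈ range (l + 1), closedCount s m k j * secCount2 s m (n - k) (l - j) := by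
  simp only [closedCount, secCount2]
  rw [← card_prod_filter_add_eq]
  have hbounds : ∀ {A B : Finset (ℕ × ℕ)}, IsSecStructOn s m 0 k A →
      IsSecStructOn s m 0 (n - k) B → (∀ p ∈ A, p.1 ≤ k) ∧ ∀ q ∈ B, 0 < q.1 :=
    fun hA hB => ⟨fun p hp => by have := hA.bounds p hp; omega, fun _ => hB.fst_pos⟩
  refine (card_bij (fun x _ => x.1 ∪ shift k x.2) (fun x hx => ?_)
    (fun x hx y hy e => ?_) (fun P hP => ?_)).symm
  · obtain ⟨hx, hcard⟩ := mem_filter.1 hx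
    obtain ⟨⟨hA, hAk⟩, hB⟩ := (mem_product.1 hx).imp mem_closedFinset.1 mem_secFinset.1
    have h := isSecStructOn_union_shift hA hB hkn
    refine mem_filter.2 ⟨mem_secFinset.2 h, ?_, h.partner_eq (mem_union_left _ hAk)⟩
    rw [card_union_shift (hbounds hA hB).1 (hbounds hA hB).2, hcard]
  · obtain ⟨⟨hA, -⟩, hB⟩ := (mem_product.1 (mem_filter.1 hx).1).imp mem_closedFinset.1
      mem_secFinset.1
    obtain ⟨⟨hA', -⟩, hB'⟩ := (mem_product.1 (mem_filter.1 hy).1).imp mem_closedFinset.1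
      mem_secFinset.1
    obtain ⟨e₁, e₂⟩ := union_shift_injOn (hbounds hA hB).1 (hbounds hA hB).2
      (hbounds hA' hB').1 (hbounds hA' hB').2 e
    exact Prod.ext e₁ e₂
  · obtain ⟨h, hcard, hpk⟩ := mem_filter.1 hP |>.imp_left mem_secFinset.1
    obtain ⟨A, B, hA, hAk, hB, rfl⟩ :=
      h.exists_eq_union_shift (hpk ▸ h.mem_partner (by omega))
    refine ⟨(A, B), mem_filter.2 ⟨mem_product.2 ⟨mem_closedFinset.2 ⟨hA, hAk⟩,
      mem_secFinset.2 hB⟩, ?_⟩, rfl⟩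
    rw [← hcard, card_union_shift (hbounds hA hB).1 (hbounds hA hB).2]

theorem secFinset_zero : secFinset s m 0 = {∅} := by
  ext P
  rw [mem_secFinset, mem_singleton]
  refine ⟨fun h => eq_empty_of_forall_notMem fun p hp => ?_,
    fun h => h ▸ isSecStructOn_empty ..⟩
  have := h.bounds p hp
  omega

theorem secCount2_zero (l : ℕ) : secCount2 s m 0 l = if l = 0 then 1 else 0 := by
  rw [secCount2, secFinset_zero, filter_singleton]
  split_ifs with h₁ h₂ h₂ <;> simp_all [eq_comm]

theorem closedCount_zero (l : ℕ) : closedCount s m 0 l = 0 := by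
  rw [closedCount, card_eq_zero, filter_eq_empty_iff]
  intro P hP
  obtain ⟨h, h0⟩ := mem_closedFinset.1 hP
  have := h.bounds _ h0
  omega

theorem secCount2_succ (n l : ℕ) :
    secCount2 s m (n + 1) l = secCount2 s m n l +
      ∑ k ∈ range (n + 2), ∑ j ∈ range (l + 1),
        closedCount s m k j * secCount2 s m (n + 1 - k) (l - j) := by
  have hfib : secCount2 s m (n + 1) l =
      ∑ k ∈ range (n + 2), #{P ∈ secFinset s m (n + 1) | #P = l ∧ partner P = k} := by
    rw [secCount2, card_eq_sum_card_fiberwise (f := partner) (t := range (n + 2))]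
    · simp only [filter_filter]
    · intro P hP
      have := (mem_secFinset.1 (mem_filter.1 hP).1).partner_le
      simp only [coe_range, Set.mem_Iio]
      omega
  rw [hfib, sum_range_succ', sum_range_succ' _ (n + 1), card_filter_partner_eq_zero]
  simp only [closedCount_zero, zero_mul, sum_const_zero, add_zero, add_comm (secCount2 s m n l)]
  congr 1
  refine sum_congr rfl fun k hk => card_filter_partner_eq (by omega) ?_ l
  have := mem_range.1 hk
  omega

theorem card_closed_filter_mem_add_two (hs : 1 ≤ s) (n l : ℕ) :
    #{P ∈ closedFinset s m (n + 2) | #P = l + 1 ∧ (s + 1, n + 2 - s) ∈ P} =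
      closedCount s m n l := by
  refine (card_bij (fun Q _ => wrap 1 n Q) (fun Q hQ => ?_) (fun Q₁ hQ₁ Q₂ hQ₂ e => ?_)
    (fun P hP => ?_)).symm
  · obtain ⟨⟨hQ, hQn⟩, hcard⟩ := mem_filter.1 hQ |>.imp_left mem_closedFinset.1
    have hstk := hQ.outer_stack hQn
    have hmem := hstk (s - 1) (by omega)
    have := hQ.bounds _ hmem
    refine mem_filter.2 ⟨mem_closedFinset.2 ⟨?_, ?_⟩, ?_, ?_⟩
    · exact isSecStructOn_wrap hQ le_rfl (fun b hb => hstk b (by omega))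
        (fun he => by simp [he] at hQn)
    · simpa using outerStack_mem_wrap (r := n) (Q := Q) zero_lt_one
    · rw [card_wrap fun _ => hQ.fst_pos, hcard, add_comm]
    · have e : (s + 1, n + 2 - s) = (1 + (s - 1) + 1, n - (s - 1) + 1) := by
        ext <;> simp only <;> omega
      rw [e, add_mem_wrap (by omega)]
      exact hmem
  · have h₁ := mem_secFinset.1 (mem_filter.1 (mem_filter.1 hQ₁).1).1
    have h₂ := mem_secFinset.1 (mem_filter.1 (mem_filter.1 hQ₂).1).1
    exact wrap_injOn (fun _ => h₁.fst_pos) (fun _ => h₂.fst_pos) e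
  · obtain ⟨⟨h, hN⟩, hcard, hnext⟩ := mem_filter.1 hP |>.imp_left mem_closedFinset.1
    have hlong : ∀ a < s + 1, (1 + a, n + 2 - a) ∈ P := by
      intro a ha
      rcases Nat.lt_or_ge a s with has | has
      · exact h.outer_stack hN a has
      · convert hnext using 2 <;> omega
    have hstk : ∀ a < 1, (1 + a, n + 2 * 1 - a) ∈ P := fun a ha => by
      obtain rfl : a = 0 := by omega
      simpa using hN
    obtain ⟨Q, hQ, rfl⟩ := h.exists_eq_wrap hstk fun _ b hb => by
      convert hlong (1 + b) (by omega) using 2 <;> omega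
    have hQn : (1, n) ∈ Q := (add_mem_wrap le_rfl).1 (by simpa using hlong 1 (by omega))
    refine ⟨Q, mem_filter.2 ⟨mem_closedFinset.2 ⟨hQ, hQn⟩, ?_⟩, rfl⟩
    rw [card_wrap fun _ => hQ.fst_pos] at hcard
    omega

theorem card_closed_filter_not_mem_add_two_mul (hs : 1 ≤ s) (r j : ℕ) :
    #{P ∈ closedFinset s m (r + 2 * s) | #P = j + s ∧ (s + 1, r + s) ∉ P} =
      #{Q ∈ secFinset s m r | #Q = j ∧ (1, r) ∉ Q ∧ (Q = ∅ → m ≤ r)} := by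
  have hinner : ∀ {Q : Finset (ℕ × ℕ)}, (s + 1, r + s) ∈ wrap s r Q ↔ (1, r) ∈ Q := by
    intro Q
    rw [← add_mem_wrap le_rfl, add_comm 1 s]
  refine (card_bij (fun Q _ => wrap s r Q) (fun Q hQ => ?_) (fun Q₁ hQ₁ Q₂ hQ₂ e => ?_)
    (fun P hP => ?_)).symm
  · obtain ⟨hQ, hcard, hr, hhair⟩ := mem_filter.1 hQ |>.imp_left mem_secFinset.1
    refine mem_filter.2 ⟨mem_closedFinset.2 ⟨?_, ?_⟩, ?_, hinner.not.2 hr⟩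
    · exact isSecStructOn_wrap hQ hs (fun b hb => by omega) hhair
    · simpa using outerStack_mem_wrap (r := r) (Q := Q) hs
    · rw [card_wrap fun _ => hQ.fst_pos, hcard, add_comm]
  · have h₁ := mem_secFinset.1 (mem_filter.1 hQ₁).1
    have h₂ := mem_secFinset.1 (mem_filter.1 hQ₂).1
    exact wrap_injOn (fun _ => h₁.fst_pos) (fun _ => h₂.fst_pos) e
  · obtain ⟨⟨h, hN⟩, hcard, hnext⟩ := mem_filter.1 hP |>.imp_left mem_closedFinset.1
    obtain ⟨Q, hQ, rfl⟩ := h.exists_eq_wrap (t := s) (r := r) (h.outer_stack hN)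
      (fun h' => absurd h' hnext)
    refine ⟨Q, mem_filter.2 ⟨mem_secFinset.2 hQ, ?_, hinner.not.1 hnext, fun hQe => ?_⟩,
      rfl⟩
    · rw [card_wrap fun _ => hQ.fst_pos] at hcard
      omega
    · subst hQe
      have := h.hairpin _ (outerStack_mem_wrap (a := s - 1) (by omega)) (fun x h₁ h₂ hx => ?_)
      · simp only at this; omega
      · obtain ⟨p, hp, hpx⟩ := hx
        rcases mem_wrap.1 hp with ⟨a, ha, rfl⟩ | hp
        · simp only at h₁ h₂ hpx; omega
        · simp [shift] at hp

theorem card_closed_filter_mem (hs : 1 ≤ s) (n l : ℕ) :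
    #{P ∈ closedFinset s m n | #P = l ∧ (s + 1, n - s) ∈ P} =
      if 2 ≤ n ∧ 1 ≤ l then closedCount s m (n - 2) (l - 1) else 0 := by
  split_ifs with hnl
  · obtain ⟨n, rfl⟩ : ∃ n', n = n' + 2 := ⟨n - 2, by omega⟩
    obtain ⟨l, rfl⟩ : ∃ l', l = l' + 1 := ⟨l - 1, by omega⟩
    exact card_closed_filter_mem_add_two hs n l
  · rw [card_eq_zero, filter_eq_empty_iff]
    rintro P hP ⟨rfl, -⟩
    obtain ⟨h, hN⟩ := mem_closedFinset.1 hP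
    have := h.bounds _ hN
    have := card_pos.2 ⟨_, hN⟩
    omega

theorem card_closed_filter_not_mem (hs : 1 ≤ s) (n l : ℕ) :
    #{P ∈ closedFinset s m n | #P = l ∧ (s + 1, n - s) ∉ P} =
      if 2 * s ≤ n ∧ s ≤ l then
        #{Q ∈ secFinset s m (n - 2 * s) | #Q = l - s ∧ (1, n - 2 * s) ∉ Q ∧
          (Q = ∅ → m ≤ n - 2 * s)}
      else 0 := by
  split_ifs with hnl
  · obtain ⟨r, rfl⟩ : ∃ r, n = r + 2 * s := ⟨n - 2 * s, by omega⟩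
    obtain ⟨j, rfl⟩ : ∃ j, l = j + s := ⟨l - s, by omega⟩
    rw [← card_closed_filter_not_mem_add_two_mul hs, Nat.add_sub_cancel, Nat.add_sub_cancel,
      show r + 2 * s - s = r + s by omega]
  · rw [card_eq_zero, filter_eq_empty_iff]
    rintro P hP ⟨rfl, -⟩
    obtain ⟨h, hN⟩ := mem_closedFinset.1 hP
    have hstk := h.outer_stack hN
    have := h.bounds _ (hstk (s - 1) (by omega))
    have : s ≤ #P := by
      rw [← card_outerStack (t := s) n]
      exact card_le_card fun p hp => by
        obtain ⟨a, ha, rfl⟩ := mem_outerStack.1 hp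
        exact hstk a ha
    simp only at *
    omega

theorem card_inner_add_closedCount (r j : ℕ) :
    #{Q ∈ secFinset s m r | #Q = j ∧ (1, r) ∉ Q ∧ (Q = ∅ → m ≤ r)} +
      closedCount s m r j +
      (if j = 0 ∧ r < m then 1 else 0) = secCount2 s m r j := by
  set S := {Q ∈ secFinset s m r | #Q = j}
  have hclosed : closedCount s m r j = #{Q ∈ S | (1, r) ∈ Q} := by
    simp only [closedCount, closedFinset, S, filter_filter, and_comm]
  have hinner : #{Q ∈ secFinset s m r | #Q = j ∧ (1, r) ∉ Q ∧ (Q = ∅ → m ≤ r)} =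
      #{Q ∈ {Q ∈ S | (1, r) ∉ Q} | Q = ∅ → m ≤ r} := by
    rw [filter_filter, filter_filter]
  have hshort : #{Q ∈ {Q ∈ S | (1, r) ∉ Q} | ¬(Q = ∅ → m ≤ r)} =
      if j = 0 ∧ r < m then 1 else 0 := by
    have : {Q ∈ {Q ∈ S | (1, r) ∉ Q} | ¬(Q = ∅ → m ≤ r)} =
        ({∅} : Finset (Finset (ℕ × ℕ))).filter fun _ => j = 0 ∧ r < m := by
      ext Q
      simp only [S, mem_filter, mem_singleton, mem_secFinset, Classical.not_imp, not_le]
      constructor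
      · rintro ⟨⟨⟨-, rfl⟩, -⟩, rfl, hr⟩
        simp [hr]
      · rintro ⟨rfl, rfl, hr⟩
        simp [isSecStructOn_empty, hr]
    rw [this, filter_singleton]
    split_ifs <;> rfl
  rw [hinner, hclosed, ← hshort, add_right_comm, card_filter_add_card_filter_not, add_comm,
    card_filter_add_card_filter_not, secCount2]

theorem closedCount_eq (hs : 1 ≤ s) (n l : ℕ) :
    (closedCount s m n l : ℚ) =
      (if 2 ≤ n ∧ 1 ≤ l then (closedCount s m (n - 2) (l - 1) : ℚ) else 0) +
        if 2 * s ≤ n ∧ s ≤ l then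
          (secCount2 s m (n - 2 * s) (l - s) : ℚ) - closedCount s m (n - 2 * s) (l - s) -
            if l - s = 0 ∧ n - 2 * s < m then 1 else 0
        else 0 := by
  have hsplit : closedCount s m n l =
      #{P ∈ closedFinset s m n | #P = l ∧ (s + 1, n - s) ∈ P} +
        #{P ∈ closedFinset s m n | #P = l ∧ (s + 1, n - s) ∉ P} := by
    rw [closedCount, ← card_filter_add_card_filter_not (fun P => (s + 1, n - s) ∈ P),
      filter_filter, filter_filter]
  have hinner := card_inner_add_closedCount (s := s) (m := m) (n - 2 * s) (l - s)
  rw [hsplit, card_closed_filter_mem hs, card_closed_filter_not_mem hs, ← hinner]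
  push_cast [Nat.cast_ite]
  split_ifs <;> ring

end counting

noncomputable def bideg (a b : ℕ) : Fin 2 →₀ ℕ := Finsupp.single 0 a + Finsupp.single 1 b

section bideg

variable {a b : ℕ}

@[simp] theorem bideg_apply_zero : bideg a b 0 = a := by simp [bideg]

@[simp] theorem bideg_apply_one : bideg a b 1 = b := by simp [bideg]

theorem bideg_apply_eq (d : Fin 2 →₀ ℕ) : bideg (d 0) (d 1) = d := by
  ext i; fin_cases i <;> simp

theorem bideg_le_iff {d : Fin 2 →₀ ℕ} : bideg a b ≤ d ↔ a ≤ d 0 ∧ b ≤ d 1 := by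
  rw [Finsupp.le_def]
  refine ⟨fun h => ⟨by simpa using h 0, by simpa using h 1⟩, fun ⟨h₀, h₁⟩ i => ?_⟩
  fin_cases i <;> simpa

end bideg

open MvPowerSeries

section bivariate

variable {R : Type*} [CommSemiring R]

/-- The series `∑ f n l zⁿ wˡ` in `z = X 0` and `w = X 1`. -/
def bivariate (f : ℕ → ℕ → R) : MvPowerSeries (Fin 2) R := fun d => f (d 0) (d 1)

theorem coeff_bivariate (f : ℕ → ℕ → R) (d : Fin 2 →₀ ℕ) :
    coeff d (bivariate f) = f (d 0) (d 1) := rfl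

theorem bivariate_add (f g : ℕ → ℕ → R) :
    bivariate f + bivariate g = bivariate fun n l => f n l + g n l := rfl

theorem one_eq_bivariate :
    (1 : MvPowerSeries (Fin 2) R) = bivariate fun n l => if n = 0 ∧ l = 0 then 1 else 0 := by
  ext d
  rw [coeff_one, coeff_bivariate, ← bideg_apply_eq d]
  simp [Finsupp.ext_iff, Fin.forall_fin_two]

theorem X_pow_mul_X_pow_mul_bivariate (a b : ℕ) (f : ℕ → ℕ → R) :
    X 0 ^ a * X 1 ^ b * bivariate f =
      bivariate fun n l => if a ≤ n ∧ b ≤ l then f (n - a) (l - b) else 0 := by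
  ext d
  rw [X_pow_eq, X_pow_eq, monomial_mul_monomial, one_mul, coeff_monomial_mul,
    show Finsupp.single 0 a + Finsupp.single 1 b = bideg a b from rfl, coeff_bivariate,
    coeff_bivariate]
  by_cases h : a ≤ d 0 ∧ b ≤ d 1
  · simp [bideg_le_iff.2 h, h]
  · simp [mt bideg_le_iff.1 h, h]

theorem sum_range_X_pow_eq_bivariate (m : ℕ) :
    ∑ j ∈ range m, (X 0 : MvPowerSeries (Fin 2) R) ^ j =
      bivariate fun n l => if l = 0 ∧ n < m then 1 else 0 := by
  ext d
  have hd : ∀ j, d = Finsupp.single 0 j ↔ j = d 0 ∧ d 1 = 0 := fun j => by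
    simp [Finsupp.ext_iff, Fin.forall_fin_two, eq_comm]
  simp only [map_sum, X_pow_eq, coeff_monomial, coeff_bivariate, hd, ite_and]
  rw [sum_ite_eq']
  simp only [mem_range]
  split_ifs <;> simp_all

theorem bivariate_mul (f g : ℕ → ℕ → R) :
    bivariate f * bivariate g = bivariate fun n l =>
      ∑ k ∈ range (n + 1), ∑ j ∈ range (l + 1), f k j * g (n - k) (l - j) := by
  ext d
  rw [coeff_mul, coeff_bivariate, ← sum_product']
  refine sum_nbij' (fun p => (p.1 0, p.1 1)) (fun x => (bideg x.1 x.2, d - bideg x.1 x.2))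
    (fun p hp => ?_) (fun x hx => ?_) (fun p hp => ?_) (fun x hx => ?_) (fun p hp => ?_)
  · rw [HasAntidiagonal.mem_antidiagonal] at hp
    simp only [mem_product, mem_range]
    have h₀ := congrArg (· 0) hp; have h₁ := congrArg (· 1) hp
    simp only [Finsupp.add_apply] at h₀ h₁
    omega
  · simp only [mem_product, mem_range] at hx
    rw [HasAntidiagonal.mem_antidiagonal, add_tsub_cancel_of_le (bideg_le_iff.2 (by omega))]
  · rw [HasAntidiagonal.mem_antidiagonal] at hp
    rw [bideg_apply_eq, ← hp, add_tsub_cancel_left]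
  · simp
  · rw [HasAntidiagonal.mem_antidiagonal] at hp
    rw [coeff_bivariate, coeff_bivariate, ← hp]
    simp

end bivariate

theorem bivariate_sub {R : Type*} [CommRing R] (f g : ℕ → ℕ → R) :
    bivariate f - bivariate g = bivariate fun n l => f n l - g n l := rfl

noncomputable def closedGf (s m : ℕ) : MvPowerSeries (Fin 2) ℚ :=
  bivariate fun n l => (closedCount s m n l : ℚ)

theorem Rgf2_eq_bivariate (s m : ℕ) : Rgf2 s m = bivariate fun n l => (secCount2 s m n l : ℚ) :=
  rfl

theorem Rgf2_eq_one_add (s m : ℕ) :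
    Rgf2 s m = 1 + X 0 * Rgf2 s m + closedGf s m * Rgf2 s m := by
  have hX : (X 0 : MvPowerSeries (Fin 2) ℚ) * Rgf2 s m = X 0 ^ 1 * X 1 ^ 0 * Rgf2 s m := by
    simp
  rw [hX, Rgf2_eq_bivariate, closedGf, one_eq_bivariate, X_pow_mul_X_pow_mul_bivariate,
    bivariate_mul, bivariate_add, bivariate_add]
  congr 1
  funext n l
  cases n with
  | zero => simp [secCount2_zero, closedCount_zero]
  | succ n => simp [secCount2_succ]

theorem closedGf_eq_add {s m : ℕ} (hs : 1 ≤ s) :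
    closedGf s m = X 0 ^ 2 * X 1 * closedGf s m +
      X 0 ^ (2 * s) * X 1 ^ s * (Rgf2 s m - closedGf s m - ∑ j ∈ range m, X 0 ^ j) := by
  have hX : (X 0 : MvPowerSeries (Fin 2) ℚ) ^ 2 * X 1 = X 0 ^ 2 * X 1 ^ 1 := by rw [pow_one]
  rw [hX, closedGf, Rgf2_eq_bivariate, sum_range_X_pow_eq_bivariate, bivariate_sub,
    bivariate_sub, X_pow_mul_X_pow_mul_bivariate, X_pow_mul_X_pow_mul_bivariate, bivariate_add]
  congr 1
  funext n l
  exact closedCount_eq hs n l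

theorem stmt6_general (s m : ℕ) (hs : 1 ≤ s) :
    (MvPowerSeries.X 0 : MvPowerSeries (Fin 2) ℚ) ^ (2 * s) * MvPowerSeries.X 1 ^ s
        * Rgf2 s m ^ 2
      - ((1 - MvPowerSeries.X 0)
            * (1 - MvPowerSeries.X 0 ^ 2 * MvPowerSeries.X 1
                + MvPowerSeries.X 0 ^ (2 * s) * MvPowerSeries.X 1 ^ s)
          + MvPowerSeries.X 0 ^ (2 * s) * MvPowerSeries.X 1 ^ s
            * ∑ j ∈ Finset.range m, (MvPowerSeries.X 0 : MvPowerSeries (Fin 2) ℚ) ^ j)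
        * Rgf2 s m
      + (1 - MvPowerSeries.X 0 ^ 2 * MvPowerSeries.X 1
          + MvPowerSeries.X 0 ^ (2 * s) * MvPowerSeries.X 1 ^ s) = 0 := by
  linear_combination
    (-(1 - X 0 ^ 2 * X 1 + X 0 ^ (2 * s) * X 1 ^ s)) * Rgf2_eq_one_add s m -
      Rgf2 s m * closedGf_eq_add hs

theorem stmt6 (s m : ℕ) (hs : 1 ≤ s) (hm : 1 ≤ m) :
    (MvPowerSeries.X 0 : MvPowerSeries (Fin 2) ℚ) ^ (2 * s) * MvPowerSeries.X 1 ^ s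
        * Rgf2 s m ^ 2
      - ((1 - MvPowerSeries.X 0)
            * (1 - MvPowerSeries.X 0 ^ 2 * MvPowerSeries.X 1
                + MvPowerSeries.X 0 ^ (2 * s) * MvPowerSeries.X 1 ^ s)
          + MvPowerSeries.X 0 ^ (2 * s) * MvPowerSeries.X 1 ^ s
            * ∑ j ∈ Finset.range m, (MvPowerSeries.X 0 : MvPowerSeries (Fin 2) ℚ) ^ j)
        * Rgf2 s m
      + (1 - MvPowerSeries.X 0 ^ 2 * MvPowerSeries.X 1
          + MvPowerSeries.X 0 ^ (2 * s) * MvPowerSeries.X 1 ^ s) = 0 :=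
  stmt6_general s m hs
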